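/- Let F : ℝ → ℝ be continuous with F ≥ 0, F(M) = 0, and F bounded on [0,M]. Let k be a positive integer, α = tan(π/(2k)), S_ρ the sector of half-angle π/(2k) truncated to B_ρ, and w = min{M, (α x₁ - |x₂|)/√2} extended by 0 outside S. Then there exists C > 0 (depending on k, M, and sup_{[0,M]}F, but not on ρ) such that ∫_{S_{ρ}} (½|∇w|² + F(w)) ≤ Cρ + F(0)·|S_ρ| for all ρ > 1. -/

import Mathlib

/-!
The profile `w` is Lipschitz, so `½|∇w|² + F(w)` is bounded on the whole sector. Away from the
transition region `{a x₁ - |x₂| < √2 M}` the profile is locally the constant `M`, where the energy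
density is `F(M) = 0 ≤ F(0)`; inside the sector the transition region lies within vertical
distance `√2 M` of the two boundary rays, so its area in `B_ρ` is `O(ρ)`. The boundary of the
plateau, where `w` is not differentiable, is a null set.
-/

open Real Set MeasureTheory

/-- The paper's `w`, written as a clamp so that it is defined by one Lipschitz formula on `ℝ²`. -/
noncomputable def wedgeProfile (a M : ℝ) (y : ℝ × ℝ) : ℝ :=
  max 0 (min M ((a * y.1 - |y.2|) / √2))

def transitionRegion (a M : ℝ) : Set (ℝ × ℝ) :=
  {y | a * y.1 - |y.2| < √2 * M}

section WedgeProfile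

variable {a M : ℝ}

lemma ite_eq_wedgeProfile (hM : 0 ≤ M) (y : ℝ × ℝ) :
    (if a * y.1 > |y.2| then min M ((a * y.1 - |y.2|) / √2) else 0) = wedgeProfile a M y := by
  unfold wedgeProfile
  split_ifs with h
  · have : 0 < (a * y.1 - |y.2|) / √2 := div_pos (by linarith) (by positivity)
    exact (max_eq_right (le_min hM this.le)).symm
  · have : (a * y.1 - |y.2|) / √2 ≤ 0 :=
      div_nonpos_of_nonpos_of_nonneg (by linarith) (by positivity)
    rw [min_eq_right (this.trans hM), max_eq_left this]

lemma wedgeProfile_mem_Icc (hM : 0 ≤ M) (y : ℝ × ℝ) : wedgeProfile a M y ∈ Icc 0 M :=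
  ⟨le_max_left _ _, max_le hM (min_le_left _ _)⟩

lemma lipschitzWith_wedgeProfile : LipschitzWith (‖a‖₊ + 1) (wedgeProfile a M) := by
  have hheight : LipschitzWith (‖a‖₊ + 1) fun y : ℝ × ℝ => (a * y.1 - |y.2|) / √2 := by
    refine LipschitzWith.of_dist_le_mul fun x y => ?_
    have h1 : |x.1 - y.1| ≤ dist x y := by
      rw [Prod.dist_eq, ← Real.dist_eq]; exact le_max_left _ _
    have h2 : |x.2 - y.2| ≤ dist x y := by
      rw [Prod.dist_eq, ← Real.dist_eq]; exact le_max_right _ _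
    have h3 : abs (|x.2| - |y.2|) ≤ |x.2 - y.2| := abs_abs_sub_abs_le_abs_sub _ _
    rw [Real.dist_eq, ← sub_div, abs_div, abs_of_pos (by positivity : (0:ℝ) < √2)]
    refine (div_le_self (abs_nonneg _) one_lt_sqrt_two.le).trans ?_
    calc |a * x.1 - |x.2| - (a * y.1 - |y.2|)| = |a * (x.1 - y.1) - (|x.2| - |y.2|)| := by ring_nf
      _ ≤ |a| * |x.1 - y.1| + |x.2 - y.2| := by
        rw [← abs_mul]; exact (abs_sub _ _).trans (by gcongr)
      _ ≤ (|a| + 1) * dist x y := by nlinarith [abs_nonneg a]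
      _ = _ := by simp
  exact (hheight.const_min M).const_max 0

lemma wedgeProfile_eventuallyEq_of_lt (hM : 0 ≤ M) {x : ℝ × ℝ} (hx : √2 * M < a * x.1 - |x.2|) :
    wedgeProfile a M =ᶠ[nhds x] fun _ => M := by
  have hopen : IsOpen {y : ℝ × ℝ | √2 * M < a * y.1 - |y.2|} :=
    isOpen_lt continuous_const (by fun_prop)
  filter_upwards [hopen.mem_nhds hx] with y hy
  have : M ≤ (a * y.1 - |y.2|) / √2 := by
    rw [le_div_iff₀ (by positivity)]; linarith [hy.le]
  rw [wedgeProfile, min_eq_left this, max_eq_right hM]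

lemma wedgeEnergy_le_indicator_add {F : ℝ → ℝ} {B : ℝ} (hM : 0 ≤ M) (hF0 : 0 ≤ F 0) (hFM : F M = 0)
    (hB : ∀ s ∈ Icc 0 M, F s ≤ B) {x : ℝ × ℝ} (hx : a * x.1 - |x.2| ≠ √2 * M) :
    1 / 2 * ‖fderiv ℝ (wedgeProfile a M) x‖ ^ 2 + F (wedgeProfile a M x) ≤
      (transitionRegion a M).indicator (fun _ => 1 / 2 * (|a| + 1) ^ 2 + B) x + F 0 := by
  by_cases hT : x ∈ transitionRegion a M
  · have hgrad : ‖fderiv ℝ (wedgeProfile a M) x‖ ≤ |a| + 1 := by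
      simpa using norm_fderiv_le_of_lipschitz ℝ (lipschitzWith_wedgeProfile (a := a) (M := M))
    have := hB _ (wedgeProfile_mem_Icc (a := a) hM x)
    rw [indicator_of_mem hT]
    nlinarith [norm_nonneg (fderiv ℝ (wedgeProfile a M) x)]
  · have hplateau := wedgeProfile_eventuallyEq_of_lt hM
      (lt_of_le_of_ne (not_lt.mp hT) hx.symm)
    rw [indicator_of_notMem hT, hplateau.fderiv_eq, hplateau.eq_of_nhds, fderiv_const_apply, hFM]
    simpa using hF0

end WedgeProfile

lemma volume_setOf_sub_abs_eq (a c : ℝ) : volume {x : ℝ × ℝ | a * x.1 - |x.2| = c} = 0 := by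
  have hmeas : MeasurableSet {x : ℝ × ℝ | a * x.1 - |x.2| = c} :=
    measurableSet_eq_fun (by fun_prop) measurable_const
  rw [Measure.volume_eq_prod, Measure.prod_apply hmeas]
  have hslice (x₁ : ℝ) : volume (Prod.mk x₁ ⁻¹' {x : ℝ × ℝ | a * x.1 - |x.2| = c}) = 0 := by
    refine measure_mono_null (fun y (hy : a * x₁ - |y| = c) => ?_)
      ((Set.toFinite {a * x₁ - c, -(a * x₁ - c)}).measure_zero volume)
    rcases abs_choice y with h | h <;> simp [← hy, h]
  simp only [hslice, lintegral_zero]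

lemma volume_setOf_abs_lt_and_sub_abs_mem_Ioo_le (a h ρ : ℝ) (hh : 0 ≤ h) :
    volume {x : ℝ × ℝ | |x.1| < ρ ∧ a * x.1 - |x.2| ∈ Ioo 0 h} ≤ ENNReal.ofReal (4 * h * ρ) := by
  set T := {x : ℝ × ℝ | |x.1| < ρ ∧ a * x.1 - |x.2| ∈ Ioo 0 h}
  have hmeas : MeasurableSet T :=
    show MeasurableSet
      ({x : ℝ × ℝ | |x.1| < ρ} ∩ (fun x : ℝ × ℝ => a * x.1 - |x.2|) ⁻¹' Ioo 0 h) from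
    (measurableSet_lt (by fun_prop) measurable_const).inter
      (measurableSet_Ioo.preimage (by fun_prop))
  have hslice (x₁ : ℝ) : volume (Prod.mk x₁ ⁻¹' T) ≤
      (Ioo (-ρ) ρ).indicator (fun _ => ENNReal.ofReal (2 * h)) x₁ := by
    by_cases hx₁ : x₁ ∈ Ioo (-ρ) ρ
    · have hsub : Prod.mk x₁ ⁻¹' T ⊆ Ioo (a * x₁ - h) (a * x₁) ∪ Ioo (-(a * x₁)) (h - a * x₁) := by
        rintro y ⟨-, h₁, h₂⟩
        rcases abs_choice y with hy | hy <;> rw [hy] at h₁ h₂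
        · exact Or.inl ⟨by linarith, by linarith⟩
        · exact Or.inr ⟨by linarith, by linarith⟩
      calc volume (Prod.mk x₁ ⁻¹' T)
          ≤ volume (Ioo (a * x₁ - h) (a * x₁)) + volume (Ioo (-(a * x₁)) (h - a * x₁)) :=
            (measure_mono hsub).trans (measure_union_le _ _)
        _ = _ := by
          rw [indicator_of_mem hx₁, Real.volume_Ioo, Real.volume_Ioo,
            ← ENNReal.ofReal_add (by linarith) (by linarith)]
          ring_nf
    · have : Prod.mk x₁ ⁻¹' T = ∅ :=
        eq_empty_of_forall_notMem fun y hy => hx₁ (abs_lt.mp hy.1)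
      simp [this]
  calc volume T = ∫⁻ x₁, volume (Prod.mk x₁ ⁻¹' T) := by
        rw [Measure.volume_eq_prod, Measure.prod_apply hmeas]
    _ ≤ ∫⁻ x₁, (Ioo (-ρ) ρ).indicator (fun _ => ENNReal.ofReal (2 * h)) x₁ := lintegral_mono hslice
    _ ≤ ENNReal.ofReal (4 * h * ρ) := by
      rw [lintegral_indicator measurableSet_Ioo, setLIntegral_const, Real.volume_Ioo,
        ← ENNReal.ofReal_mul (by positivity)]
      exact ENNReal.ofReal_le_ofReal (by nlinarith)

lemma setIntegral_le_of_ae_le_indicator_add {α : Type*} [MeasurableSpace α] {μ : Measure α}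
    {S T : Set α} (hS : μ S ≠ ⊤) (hT : MeasurableSet T) {e : α → ℝ} {c b : ℝ}
    (he : ∀ᵐ x ∂μ.restrict S, 0 ≤ e x)
    (hle : ∀ᵐ x ∂μ.restrict S, e x ≤ T.indicator (fun _ => c) x + b) :
    ∫ x in S, e x ∂μ ≤ c * μ.real (T ∩ S) + b * μ.real S := by
  have : IsFiniteMeasure (μ.restrict S) := isFiniteMeasure_restrict.mpr hS
  have hint : Integrable (fun x => T.indicator (fun _ => c) x + b) (μ.restrict S) :=
    ((integrable_const c).indicator hT).add (integrable_const b)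
  refine (integral_mono_of_nonneg he hint hle).trans_eq ?_
  rw [integral_add ((integrable_const c).indicator hT) (integrable_const b),
    integral_indicator hT, Measure.restrict_restrict hT, setIntegral_const, setIntegral_const,
    smul_eq_mul, smul_eq_mul, mul_comm c, mul_comm b]

lemma setOf_sq_add_sq_lt_subset_ball {ρ : ℝ} (hρ : 0 ≤ ρ) :
    {x : ℝ × ℝ | x.1 ^ 2 + x.2 ^ 2 < ρ ^ 2} ⊆ Metric.ball 0 ρ := fun x hx => by
  replace hx : x.1 ^ 2 + x.2 ^ 2 < ρ ^ 2 := hx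
  rw [mem_ball_zero_iff, Prod.norm_def, max_lt_iff, Real.norm_eq_abs, Real.norm_eq_abs]
  exact ⟨abs_lt_of_sq_lt_sq (by nlinarith [sq_nonneg x.2]) hρ,
    abs_lt_of_sq_lt_sq (by nlinarith [sq_nonneg x.1]) hρ⟩

theorem stmt15_general (k : ℕ) (M : ℝ) (hM : 0 < M)
    (F : ℝ → ℝ) (hFc : Continuous F) (hF0 : ∀ s, 0 ≤ F s) (hFM : F M = 0) :
    ∃ C : ℝ, 0 < C ∧ ∀ ρ > (1:ℝ),
      ∫ x in {x : ℝ × ℝ | x.1^2 + x.2^2 < ρ^2 ∧ Real.tan (π/(2*k)) * x.1 > |x.2|},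
        ((1/2) * ‖fderiv ℝ (fun y : ℝ × ℝ =>
            if Real.tan (π/(2*k)) * y.1 > |y.2| then
              min M ((Real.tan (π/(2*k)) * y.1 - |y.2|) / Real.sqrt 2)
            else 0) x‖^2
          + F (if Real.tan (π/(2*k)) * x.1 > |x.2| then
              min M ((Real.tan (π/(2*k)) * x.1 - |x.2|) / Real.sqrt 2)
            else 0))
      ≤ C * ρ + F 0 *
        (volume {x : ℝ × ℝ | x.1^2 + x.2^2 < ρ^2 ∧
          Real.tan (π/(2*k)) * x.1 > |x.2|}).toReal := by
  set a := tan (π / (2 * k))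
  simp only [ite_eq_wedgeProfile hM.le, ← measureReal_def]
  obtain ⟨m, -, hm⟩ := isCompact_Icc.exists_isMaxOn (nonempty_Icc.mpr hM.le) hFc.continuousOn
  set c := 1 / 2 * (|a| + 1) ^ 2 + F m
  have hc : 0 < c := by have := hF0 m; positivity
  refine ⟨c * (4 * √2 * M), by positivity, fun ρ hρ => ?_⟩
  set S := {x : ℝ × ℝ | x.1 ^ 2 + x.2 ^ 2 < ρ ^ 2 ∧ a * x.1 > |x.2|}
  have hS_ball : S ⊆ Metric.ball 0 ρ :=
    fun x hx => setOf_sq_add_sq_lt_subset_ball (by linarith) hx.1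
  have hTS : transitionRegion a M ∩ S ⊆
      {x : ℝ × ℝ | |x.1| < ρ ∧ a * x.1 - |x.2| ∈ Ioo 0 (√2 * M)} := fun x ⟨hT, hS⟩ =>
    ⟨(norm_fst_le x).trans_lt (mem_ball_zero_iff.mp (hS_ball hS)), sub_pos.mpr hS.2, hT⟩
  have hTS_vol : volume.real (transitionRegion a M ∩ S) ≤ 4 * (√2 * M) * ρ :=
    ENNReal.toReal_le_of_le_ofReal (by positivity) ((measure_mono hTS).trans
      (volume_setOf_abs_lt_and_sub_abs_mem_Ioo_le a _ ρ (by positivity)))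
  have hT_meas : MeasurableSet (transitionRegion a M) :=
    measurableSet_lt (by fun_prop) measurable_const
  have hoff_boundary : ∀ᵐ x ∂volume.restrict S, a * x.1 - |x.2| ≠ √2 * M :=
    ae_restrict_of_ae (measure_eq_zero_iff_ae_notMem.mp (volume_setOf_sub_abs_eq a (√2 * M)))
  calc _ ≤ c * volume.real (transitionRegion a M ∩ S) + F 0 * volume.real S :=
        setIntegral_le_of_ae_le_indicator_add
          ((measure_mono hS_ball).trans_lt measure_ball_lt_top).ne hT_meas
          (.of_forall fun x => add_nonneg (by positivity) (hF0 _))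
          (hoff_boundary.mono fun x => wedgeEnergy_le_indicator_add hM.le (hF0 0) hFM
            (fun s hs => hm hs))
    _ ≤ c * (4 * √2 * M) * ρ + F 0 * volume.real S := by nlinarith

theorem stmt15 (k : ℕ) (hk : 1 ≤ k) (M : ℝ) (hM : 0 < M)
    (F : ℝ → ℝ) (hFc : Continuous F) (hF0 : ∀ s, 0 ≤ F s) (hFM : F M = 0) :
    ∃ C : ℝ, 0 < C ∧ ∀ ρ > (1:ℝ),
      ∫ x in {x : ℝ × ℝ | x.1^2 + x.2^2 < ρ^2 ∧ Real.tan (π/(2*k)) * x.1 > |x.2|},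
        ((1/2) * ‖fderiv ℝ (fun y : ℝ × ℝ =>
            if Real.tan (π/(2*k)) * y.1 > |y.2| then
              min M ((Real.tan (π/(2*k)) * y.1 - |y.2|) / Real.sqrt 2)
            else 0) x‖^2
          + F (if Real.tan (π/(2*k)) * x.1 > |x.2| then
              min M ((Real.tan (π/(2*k)) * x.1 - |x.2|) / Real.sqrt 2)
            else 0))
      ≤ C * ρ + F 0 *
        (volume {x : ℝ × ℝ | x.1^2 + x.2^2 < ρ^2 ∧
          Real.tan (π/(2*k)) * x.1 > |x.2|}).toReal :=
  stmt15_general k M hM F hFc hF0 hFM
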